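/- arXiv:1806.00805 — 2 statements merged into one kernel-verified Lean document; each statement's English description precedes it below -/
import Mathlib

section
/- If the symbolic valuation bounds V̂[a] and V̂[a'] are admissible, then the propagated bound V̂[a ∘ a'], consisting of tuples (s, s''', l+l', u+u') for all (s, s', l, u) ∈ V̂[a] and (s'', s''', l', u') ∈ V̂[a'] with s' ⊆ s'', together with tuples (s, s''', l+l', ∞) for pairs with s' ∩ s'' ≠ ∅, is an admissible symbolic valuation bound for the concatenated operator a ∘ a'. -/
open scoped ENNReal NNReal

/-- Valuation of a set of paths. -/
noncomputable def pathVal {X P : Type*} (src tgt : P → X) (C : P → ℝ≥0)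
    (A : Set P) (x x' : X) : ℝ≥0∞ :=
  ⨅ σ ∈ {σ ∈ A | src σ = x ∧ tgt σ = x'}, (C σ : ℝ≥0∞)

/-- Admissibility of a symbolic valuation bound, per-path form:
(i) every path in `A` is covered by a tuple whose lower bound is below its cost;
(ii) every tuple's upper bound dominates `sup_{x∈s₀} inf_{x'∈s₁} V[A](x,x')`. -/
def AdmissibleBound {X P : Type*} (src tgt : P → X) (C : P → ℝ≥0)
    (A : Set P) (Vhat : Set (Set X × Set X × ℝ≥0∞ × ℝ≥0∞)) : Prop :=
  (∀ σ ∈ A, ∃ T ∈ Vhat, src σ ∈ T.1 ∧ tgt σ ∈ T.2.1 ∧ T.2.2.1 ≤ (C σ : ℝ≥0∞)) ∧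
  (∀ T ∈ Vhat, (⨆ x ∈ T.1, ⨅ x' ∈ T.2.1, pathVal src tgt C A x x') ≤ T.2.2.2)

/-!
A composed path `σ ∘ σ'` is covered by the `∞`-tuple built from tuples covering `σ` and `σ'`;
these overlap at the junction point `tgt σ = src σ'`. For the upper bounds, routing through any
`x' ∈ s' ⊆ s''` gives `V[a ∘ a'](x, x''') ≤ V[a](x, x') + V[a'](x', x''')`; taking the infimum over
`x''' ∈ s'''` bounds the second summand by `u'`, and then the infimum over `x' ∈ s'` bounds the
first by `u`.
-/

section Concatenation

variable {X P : Type*} {src tgt : P → X} {C : P → ℝ≥0}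

def concatPaths (src tgt : P → X) (comp : P → P → P) (a a' : Set P) : Set P :=
  {τ | ∃ σ ∈ a, ∃ σ' ∈ a', tgt σ = src σ' ∧ τ = comp σ σ'}

lemma pathVal_le_of_mem {A : Set P} {σ : P} (hσ : σ ∈ A) :
    pathVal src tgt C A (src σ) (tgt σ) ≤ C σ :=
  biInf_le _ ⟨hσ, rfl, rfl⟩

lemma AdmissibleBound.iInf_pathVal_le {A : Set P} {Vhat : Set (Set X × Set X × ℝ≥0∞ × ℝ≥0∞)}
    (h : AdmissibleBound src tgt C A Vhat) {T : Set X × Set X × ℝ≥0∞ × ℝ≥0∞} (hT : T ∈ Vhat)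
    {x : X} (hx : x ∈ T.1) :
    ⨅ x' ∈ T.2.1, pathVal src tgt C A x x' ≤ T.2.2.2 :=
  (le_iSup₂ (f := fun x (_ : x ∈ T.1) => ⨅ x' ∈ T.2.1, pathVal src tgt C A x x') x hx).trans
    (h.2 T hT)

lemma pathVal_concatPaths_le {comp : P → P → P}
    (hsrc : ∀ σ σ' : P, tgt σ = src σ' → src (comp σ σ') = src σ)
    (htgt : ∀ σ σ' : P, tgt σ = src σ' → tgt (comp σ σ') = tgt σ')
    (hadd : ∀ σ σ' : P, tgt σ = src σ' → C (comp σ σ') = C σ + C σ')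
    (a a' : Set P) (x x' x'' : X) :
    pathVal src tgt C (concatPaths src tgt comp a a') x x'' ≤
      pathVal src tgt C a x x' + pathVal src tgt C a' x' x'' := by
  simp only [pathVal, ENNReal.iInf_add, ENNReal.add_iInf, le_iInf_iff]
  rintro σ' ⟨hσ', rfl, rfl⟩ σ ⟨hσ, rfl, hmid⟩
  calc pathVal src tgt C (concatPaths src tgt comp a a') (src σ) (tgt σ')
      = pathVal src tgt C (concatPaths src tgt comp a a')
          (src (comp σ σ')) (tgt (comp σ σ')) := by rw [hsrc σ σ' hmid, htgt σ σ' hmid]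
    _ ≤ C (comp σ σ') := pathVal_le_of_mem ⟨σ, hσ, σ', hσ', hmid, rfl⟩
    _ = C σ + C σ' := by rw [hadd σ σ' hmid, ENNReal.coe_add]

lemma iInf_pathVal_concatPaths_le {comp : P → P → P}
    (hsrc : ∀ σ σ' : P, tgt σ = src σ' → src (comp σ σ') = src σ)
    (htgt : ∀ σ σ' : P, tgt σ = src σ' → tgt (comp σ σ') = tgt σ')
    (hadd : ∀ σ σ' : P, tgt σ = src σ' → C (comp σ σ') = C σ + C σ')
    {a a' : Set P} {s' s'' : Set X} {u' : ℝ≥0∞}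
    (h' : ∀ x' ∈ s', ⨅ x'' ∈ s'', pathVal src tgt C a' x' x'' ≤ u') (x : X) :
    ⨅ x'' ∈ s'', pathVal src tgt C (concatPaths src tgt comp a a') x x'' ≤
      (⨅ x' ∈ s', pathVal src tgt C a x x') + u' := by
  simp only [ENNReal.iInf_add, le_iInf_iff]
  intro x' hx'
  calc ⨅ x'' ∈ s'', pathVal src tgt C (concatPaths src tgt comp a a') x x''
      ≤ ⨅ x'' ∈ s'', (pathVal src tgt C a x x' + pathVal src tgt C a' x' x'') :=
        iInf₂_mono fun x'' _ => pathVal_concatPaths_le hsrc htgt hadd a a' x x' x''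
    _ = pathVal src tgt C a x x' + ⨅ x'' ∈ s'', pathVal src tgt C a' x' x'' := by
        simp only [ENNReal.add_iInf]
    _ ≤ pathVal src tgt C a x x' + u' := add_le_add_right (h' x' hx') _

end Concatenation

/-- if `V̂[a]` and `V̂[a']` are admissible, then the propagated bound
for the concatenation `a ∘ a'` is admissible. -/
theorem propagation_admissible
    {X P : Type*} (src tgt : P → X) (C : P → ℝ≥0)
    (comp : P → P → P)
    (hsrc : ∀ σ σ' : P, tgt σ = src σ' → src (comp σ σ') = src σ)
    (htgt : ∀ σ σ' : P, tgt σ = src σ' → tgt (comp σ σ') = tgt σ')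
    (hadd : ∀ σ σ' : P, tgt σ = src σ' → C (comp σ σ') = C σ + C σ')
    (a a' : Set P) (Vhat Vhat' : Set (Set X × Set X × ℝ≥0∞ × ℝ≥0∞))
    (h : AdmissibleBound src tgt C a Vhat)
    (h' : AdmissibleBound src tgt C a' Vhat') :
    AdmissibleBound src tgt C
      {τ | ∃ σ ∈ a, ∃ σ' ∈ a', tgt σ = src σ' ∧ τ = comp σ σ'}
      ({T | ∃ s s' l u, (s, s', l, u) ∈ Vhat ∧
          ∃ s'' s''' l' u', (s'', s''', l', u') ∈ Vhat' ∧
            s' ⊆ s'' ∧ T = (s, s''', l + l', u + u')} ∪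
       {T | ∃ s s' l u, (s, s', l, u) ∈ Vhat ∧
          ∃ s'' s''' l' u', (s'', s''', l', u') ∈ Vhat' ∧
            (s' ∩ s'').Nonempty ∧ T = (s, s''', l + l', (∞ : ℝ≥0∞))}) := by
  refine ⟨?_, ?_⟩
  · rintro τ ⟨σ, hσ, σ', hσ', hmid, rfl⟩
    obtain ⟨⟨s, s', l, u⟩, hT, hσs, hσs', hl⟩ := h.1 σ hσ
    obtain ⟨⟨s'', s''', l', u'⟩, hT', hσ's'', hσ's''', hl'⟩ := h'.1 σ' hσ'
    refine ⟨(s, s''', l + l', ∞),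
      Or.inr ⟨s, s', l, u, hT, s'', s''', l', u', hT', ⟨tgt σ, hσs', hmid ▸ hσ's''⟩, rfl⟩,
      ?_, ?_, ?_⟩
    · rwa [hsrc σ σ' hmid]
    · rwa [htgt σ σ' hmid]
    · rw [hadd σ σ' hmid, ENNReal.coe_add]
      exact add_le_add hl hl'
  · rintro T (⟨s, s', l, u, hT, s'', s''', l', u', hT', hsub, rfl⟩ |
      ⟨-, -, -, -, -, -, -, -, -, -, -, rfl⟩)
    · refine iSup₂_le fun x hx => ?_
      calc ⨅ x'' ∈ s''', pathVal src tgt C (concatPaths src tgt comp a a') x x''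
          ≤ (⨅ x' ∈ s', pathVal src tgt C a x x') + u' :=
            iInf_pathVal_concatPaths_le hsrc htgt hadd
              (fun x' hx' => h'.iInf_pathVal_le hT' (hsub hx')) x
        _ ≤ u + u' := add_le_add_left (h.iInf_pathVal_le hT hx) _
    · exact le_top
end

section
/- Pruning dominated plans preserves the optimum: let P be a finite collection of plans (sets of paths) and suppose p, p' ∈ P with V̂_U[p] ≺ V̂_L[p'] in the sense that for all (x, x'), V̂_U[p]({x},{x'}) < V̂_L[p']({x},{x'}) or V̂_L[p']({x},{x'}) = ∞, where V̂[p], V̂[p'] are admissible bounds. Then the infimal cost over paths from x_s to the goal set among plans in P equals that among plans in P \ {p'}. -/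
open scoped ENNReal NNReal

/-- pruning dominated plans preserves the optimum. If `p, p' ∈ Pl`,
`U` is an admissible upper bound for `p`, `L'` an admissible lower bound for `p'`,
and `V̂_U[p] ≺ V̂_L[p']` pointwise, then the infimal cost to reach the goal among
plans in `Pl` equals that among plans in `Pl \ {p'}`. -/
theorem pruning_preserves_optimum
    {X P : Type*} (src tgt : P → X) (C : P → ℝ≥0)
    (V : Set P → X → X → ℝ≥0∞)
    (hV : ∀ (A : Set P) (x x' : X),
      V A x x' = ⨅ σ ∈ {σ ∈ A | src σ = x ∧ tgt σ = x'}, (C σ : ℝ≥0∞))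
    (Pl : Set (Set P)) (hfin : Pl.Finite)
    (p p' : Set P) (hp : p ∈ Pl) (hp' : p' ∈ Pl)
    (U L' : X → X → ℝ≥0∞)
    (hU : ∀ x x' : X, V p x x' ≤ U x x')
    (hL : ∀ x x' : X, L' x x' ≤ V p' x x')
    (hprec : ∀ x x' : X, U x x' < L' x x' ∨ L' x x' = ∞)
    (xs : X) (Xg : Set X) :
    (⨅ q ∈ Pl, ⨅ x' ∈ Xg, V q xs x') =
      ⨅ q ∈ Pl \ {p'}, ⨅ x' ∈ Xg, V q xs x' := by
  have hdom : ∀ x x' : X, V p x x' ≤ V p' x x' := by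
    intro x x'
    rcases hprec x x' with h | h
    · exact (hU x x').trans (h.le.trans (hL x x'))
    · have := hL x x'
      rw [h] at this
      simp [top_le_iff.mp this]
  refine le_antisymm ?_ ?_
  · exact le_iInf₂ fun q hq => biInf_le _ hq.1
  · refine le_iInf₂ fun q hq => ?_
    by_cases hqp : q = p'
    · rw [hqp]
      by_cases hpp : p = p'
      · -- then V p' xs x' = ∞ for all x'
        have : ∀ x' : X, V p' xs x' = ∞ := by
          intro x'
          rcases hprec xs x' with h | h
          · exact absurd (((hU xs x').trans_lt h).trans_le (hL xs x')) (by rw [hpp]; exact lt_irrefl _)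
          · have := hL xs x'; rw [h] at this; exact top_le_iff.mp this
        simp [this]
      · have hmem : p ∈ Pl \ {p'} := ⟨hp, hpp⟩
        exact le_trans (biInf_le _ hmem) (iInf₂_mono fun x' _ => hdom xs x')
    · exact biInf_le _ ⟨hq, hqp⟩
end
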